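/- Let n ≥ k ≥ 1 be integers, let F be a pointwise-increasing family of k-element subsets of [n], and let x, y ∈ [n] with x < y. Then, after standardisation, F_x^+ ⊆ F_y^+ as families of (k−1)-subsets of [n−1]. -/

import Mathlib

/-- The board `[n] = {1, …, n}` as a finite set of natural numbers. -/
def board (n : ℕ) : Finset ℕ := Finset.Icc 1 n

/-- The order-preserving relabelling of `[n] \ {x}` onto `[n-1]`:
elements below `x` are unchanged, elements above `x` drop by one. -/
def stdElt (x r : ℕ) : ℕ := if r < x then r else r - 1

/-- Standardise a set avoiding `x`: relabel it via `stdElt x`. -/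
def stdSet (x : ℕ) (S : Finset ℕ) : Finset ℕ := S.image (stdElt x)

/-- The standardised section `F_x^+ = { S \ {x} : x ∈ S ∈ F }`,
viewed as a family of subsets of `[n-1]`. -/
def secPlus (F : Set (Finset ℕ)) (x : ℕ) : Set (Finset ℕ) :=
  {T | ∃ S ∈ F, x ∈ S ∧ T = stdSet x (S.erase x)}

/-- The standardised section `F_x^- = { S ∈ F : x ∉ S }`,
viewed as a family of subsets of `[n-1]`. -/
def secMinus (F : Set (Finset ℕ)) (x : ℕ) : Set (Finset ℕ) :=
  {T | ∃ S ∈ F, x ∉ S ∧ T = stdSet x S}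

mutual
  /-- `AliceWins n k F`: Alice wins her `F`-game, where `F` is a family of
  `k`-subsets of `[n]`.  Terminal games (`k = 0` or `k = n`) are won iff `F`
  is nonempty; otherwise Alice needs a first offer `x` such that Bob wins both
  his `F_x^+`-game and his `F_x^-`-game. -/
  def AliceWins (n k : ℕ) (F : Set (Finset ℕ)) : Prop :=
    if h : k = 0 ∨ n ≤ k then F.Nonempty
    else ∃ x ∈ board n,
      BobWins (n - 1) (k - 1) (secPlus F x) ∧ BobWins (n - 1) k (secMinus F x)
  termination_by n
  decreasing_by all_goals omega

  /-- `BobWins n k F`: Bob wins his `F`-game, where `F` is a family of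
  `k`-subsets of `[n]`.  Terminal games (`k = 0` or `k = n`) are won iff `F`
  is nonempty; otherwise Bob needs, for every first offer `x`, that Alice wins
  her `F_x^+`-game or her `F_x^-`-game. -/
  def BobWins (n k : ℕ) (F : Set (Finset ℕ)) : Prop :=
    if h : k = 0 ∨ n ≤ k then F.Nonempty
    else ∀ x ∈ board n,
      AliceWins (n - 1) (k - 1) (secPlus F x) ∨ AliceWins (n - 1) k (secMinus F x)
  termination_by n
  decreasing_by all_goals omega
end

/-- `S ⪯ T` in the pointwise order: the increasing enumerations of `S` and `T`
have the same length and are pointwise `≤`. -/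
def PointwiseLE (S T : Finset ℕ) : Prop :=
  List.Forall₂ (· ≤ ·) (S.sort (· ≤ ·)) (T.sort (· ≤ ·))

/-- `F` consists of `k`-element subsets of `[n]`. -/
def IsFamilyOn (n k : ℕ) (F : Set (Finset ℕ)) : Prop :=
  ∀ S ∈ F, S ⊆ board n ∧ S.card = k

/-- `F` is pointwise-increasing as a family of `k`-subsets of `[n]`:
it is upwards closed in the pointwise order. -/
def IsIncreasingFamily (n k : ℕ) (F : Set (Finset ℕ)) : Prop :=
  ∀ S T : Finset ℕ, S ∈ F → T ⊆ board n → T.card = k → PointwiseLE S T → T ∈ F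

/-!
It suffices to compare `x` with `x + 1`. If `x ∈ S ∈ F`, the image `S'` of `S` under the
transposition `(x x+1)` is pointwise above `S` (it is `S` itself when `x + 1 ∈ S`), so `S' ∈ F`;
it contains `x + 1`, and `S' \ {x+1}` standardised at `x + 1` equals `S \ {x}` standardised at `x`.
-/

open Equiv Finset

lemma pointwiseLE_refl (S : Finset ℕ) : PointwiseLE S S :=
  List.forall₂_same.mpr fun _ _ => le_rfl

lemma pointwiseLE_map_of_strictMonoOn {S : Finset ℕ} {f : ℕ ↪ ℕ} (hf : StrictMonoOn f S)
    (hle : ∀ a ∈ S, a ≤ f a) : PointwiseLE S (S.map f) := by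
  rw [PointwiseLE, ← hf.map_finsetSort, List.forall₂_map_right_iff]
  exact List.forall₂_same.mpr fun a ha => hle a ((mem_sort _).mp ha)

lemma pointwiseLE_map_swap_succ {S : Finset ℕ} {x : ℕ} (hx : x ∈ S) :
    PointwiseLE S (S.map (swap x (x + 1)).toEmbedding) := by
  by_cases hx' : x + 1 ∈ S
  · rw [map_perm]
    · exact pointwiseLE_refl S
    · intro a ha
      rcases swap_apply_ne_self_iff.mp ha with ⟨-, rfl | rfl⟩ <;> assumption
  · have hS : ∀ a ∈ S, a ≠ x + 1 := fun a ha h => hx' (h ▸ ha)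
    refine pointwiseLE_map_of_strictMonoOn ?_ ?_
    · intro a ha b hb hab
      have := hS a ha
      have := hS b hb
      simp only [toEmbedding_apply, swap_apply_def]
      split_ifs <;> omega
    · intro a ha
      have := hS a ha
      simp only [toEmbedding_apply, swap_apply_def]
      split_ifs <;> omega

lemma stdElt_succ_swap {x r : ℕ} (hr : r ≠ x) :
    stdElt (x + 1) (swap x (x + 1) r) = stdElt x r := by
  simp only [stdElt, swap_apply_def]
  split_ifs <;> omega

lemma stdSet_succ_erase_map_swap (S : Finset ℕ) (x : ℕ) :
    stdSet (x + 1) ((S.map (swap x (x + 1)).toEmbedding).erase (x + 1)) =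
      stdSet x (S.erase x) := by
  have hmap := map_erase (swap x (x + 1)).toEmbedding S x
  rw [toEmbedding_apply, swap_apply_left] at hmap
  rw [← hmap, stdSet, stdSet, map_eq_image, image_image]
  exact image_congr fun r hr => stdElt_succ_swap (ne_of_mem_erase hr)

lemma secPlus_subset_secPlus_succ {n k : ℕ} {F : Set (Finset ℕ)} (hF : IsFamilyOn n k F)
    (hinc : IsIncreasingFamily n k F) {x : ℕ} (hx : x + 1 ≤ n) :
    secPlus F x ⊆ secPlus F (x + 1) := by
  rintro T ⟨S, hSF, hxS, rfl⟩
  obtain ⟨hS_board, hS_card⟩ := hF S hSF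
  set S' := S.map (swap x (x + 1)).toEmbedding
  have hS'_board : S' ⊆ board n := by
    intro b hb
    obtain ⟨a, ha, rfl⟩ := mem_map.mp hb
    simp only [toEmbedding_apply, swap_apply_def]
    split_ifs
    · simpa [board] using hx
    · exact hS_board hxS
    · exact hS_board ha
  have hS'F : S' ∈ F :=
    hinc S S' hSF hS'_board (by rw [card_map, hS_card]) (pointwiseLE_map_swap_succ hxS)
  have hx'S' : x + 1 ∈ S' := mem_map.mpr ⟨x, hxS, swap_apply_left x (x + 1)⟩
  exact ⟨S', hS'F, hx'S', (stdSet_succ_erase_map_swap S x).symm⟩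

lemma secPlus_subset_of_lt {n k : ℕ} {F : Set (Finset ℕ)} (hF : IsFamilyOn n k F)
    (hinc : IsIncreasingFamily n k F) {x y : ℕ} (hxy : x < y) (hy : y ≤ n) :
    secPlus F x ⊆ secPlus F y := by
  induction y, hxy using Nat.le_induction with
  | base => exact secPlus_subset_secPlus_succ hF hinc hy
  | succ y _ ih => exact (ih (by omega)).trans (secPlus_subset_secPlus_succ hF hinc hy)

/-- for an increasing family, the standardised `+`-sections
increase with the sectioning element: `F_x^+ ⊆ F_y^+` for `x < y`. -/
theorem secPlus_mono (n k : ℕ) (hk : 1 ≤ k) (hkn : k ≤ n) (F : Set (Finset ℕ))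
    (hF : IsFamilyOn n k F) (hinc : IsIncreasingFamily n k F)
    (x y : ℕ) (hx : x ∈ board n) (hy : y ∈ board n) (hxy : x < y) :
    secPlus F x ⊆ secPlus F y :=
  secPlus_subset_of_lt hF hinc hxy (mem_Icc.mp hy).2
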